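/- Let Γ₁ ⊇ Γ₂ ⊇ ⋯ be a decreasing sequence of finite-index subgroups of H₃(ℤ), each normal in H₃(ℤ), with ⋂_j Γ_j = {1}. Let X := {(x_j)_{j≥1} ∈ Π_j H₃(ℤ)/Γ_j : x_{j+1} maps to x_j under the canonical projections}, a profinite group, with Haar probability measure μ, on which H₃(ℤ) acts by V_γ x := φ(γ)x, where φ(γ) := (γΓ_j)_{j≥1}. Let Σ be a finite-index subgroup of H₃(ℤ) and suppose there exists a measurable map q : X → H₃(ℤ)/Σ such that the pushforward q_*μ is the uniform probability measure on H₃(ℤ)/Σ and, for every γ ∈ H₃(ℤ), q(V_γ x) = γ·q(x) for μ-a.e. x. Then there exists j₀ with Γ_{j₀} ⊆ Σ. -/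

import Mathlib

open MeasureTheory

/-- The discrete Heisenberg group `H₃(ℤ)`: `ℤ³` with
`(a,b,c)·(a′,b′,c′) = (a+a′, b+b′, c+c′+a·b′)`. -/
@[ext] structure H3Z : Type where
  x : ℤ
  y : ℤ
  z : ℤ

namespace H3Z

instance : Mul H3Z := ⟨fun g h => ⟨g.x + h.x, g.y + h.y, g.z + h.z + g.x * h.y⟩⟩
instance : One H3Z := ⟨⟨0, 0, 0⟩⟩
instance : Inv H3Z := ⟨fun g => ⟨-g.x, -g.y, -g.z + g.x * g.y⟩⟩

@[simp] lemma mul_x (g h : H3Z) : (g * h).x = g.x + h.x := rfl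
@[simp] lemma mul_y (g h : H3Z) : (g * h).y = g.y + h.y := rfl
@[simp] lemma mul_z (g h : H3Z) : (g * h).z = g.z + h.z + g.x * h.y := rfl
@[simp] lemma one_x : (1 : H3Z).x = 0 := rfl
@[simp] lemma one_y : (1 : H3Z).y = 0 := rfl
@[simp] lemma one_z : (1 : H3Z).z = 0 := rfl
@[simp] lemma inv_x (g : H3Z) : g⁻¹.x = -g.x := rfl
@[simp] lemma inv_y (g : H3Z) : g⁻¹.y = -g.y := rfl
@[simp] lemma inv_z (g : H3Z) : g⁻¹.z = -g.z + g.x * g.y := rfl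

instance : Group H3Z where
  mul_assoc a b c := by ext <;> simp <;> ring
  one_mul a := by ext <;> simp
  mul_one a := by ext <;> simp
  inv_mul_cancel a := by ext <;> simp

end H3Z

instance (Γ : Subgroup H3Z) : MeasurableSpace (H3Z ⧸ Γ) := ⊤

/-- Left translation by `γ` on the coset space `H₃(ℤ) ⧸ Γ`. -/
def qsmul {Γ : Subgroup H3Z} (γ : H3Z) : H3Z ⧸ Γ → H3Z ⧸ Γ :=
  Quotient.map' (fun a => γ * a) fun a b hab => by
    rw [QuotientGroup.leftRel_apply] at hab ⊢
    simpa [mul_assoc] using hab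

/-- The space of the `H₃(ℤ)`-odometer: compatible sequences of cosets
(`xs (j+1)` maps to `xs j` under the canonical projection). -/
abbrev cptSeq (Γ : ℕ → Subgroup H3Z) : Type :=
  {xs : ∀ j, H3Z ⧸ Γ j //
    ∀ (j : ℕ) (g : H3Z), xs (j + 1) = QuotientGroup.mk g → xs j = QuotientGroup.mk g}

/-- The odometer action `V_γ x = φ(γ)·x` on the inverse limit. -/
def Vact (Γ : ℕ → Subgroup H3Z) (γ : H3Z) (x : cptSeq Γ) : cptSeq Γ :=
  ⟨fun j => qsmul γ (x.1 j), by
    intro j g hg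
    obtain ⟨a, ha⟩ := Quotient.exists_rep (x.1 (j + 1))
    have ha' : x.1 (j + 1) = QuotientGroup.mk a := ha.symm
    have hg2 : qsmul γ (x.1 (j + 1)) = QuotientGroup.mk g := hg
    rw [ha'] at hg2
    have hg' : (QuotientGroup.mk (γ * a) : H3Z ⧸ Γ (j + 1)) = QuotientGroup.mk g := hg2
    have hmem : (γ * a)⁻¹ * g ∈ Γ (j + 1) := by rwa [QuotientGroup.eq] at hg'
    have ha2 : x.1 (j + 1) = QuotientGroup.mk (γ⁻¹ * g) := by
      rw [ha', QuotientGroup.eq]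
      simpa [mul_assoc, mul_inv_rev] using hmem
    have hj : x.1 j = QuotientGroup.mk (γ⁻¹ * g) := x.2 j _ ha2
    show qsmul γ (x.1 j) = QuotientGroup.mk g
    rw [hj]
    show (QuotientGroup.mk (γ * (γ⁻¹ * g)) : H3Z ⧸ Γ j) = QuotientGroup.mk g
    rw [mul_inv_cancel_left]⟩

section Aux

open MeasurableSpace

variable {Γ : ℕ → Subgroup H3Z}

lemma qsmul_mk {Δ : Subgroup H3Z} (γ a : H3Z) :
    qsmul (Γ := Δ) γ (QuotientGroup.mk a) = QuotientGroup.mk (γ * a) := rfl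

lemma qsmul_inv_qsmul {Δ : Subgroup H3Z} (γ : H3Z) (y : H3Z ⧸ Δ) :
    qsmul γ⁻¹ (qsmul γ y) = y := by
  induction y using QuotientGroup.induction_on with
  | H a => rw [qsmul_mk, qsmul_mk, inv_mul_cancel_left]

lemma qsmul_qsmul_inv {Δ : Subgroup H3Z} (γ : H3Z) (y : H3Z ⧸ Δ) :
    qsmul γ (qsmul γ⁻¹ y) = y := by
  induction y using QuotientGroup.induction_on with
  | H a => rw [qsmul_mk, qsmul_mk, mul_inv_cancel_left]

/-- Left translation by an element of a normal subgroup acts trivially on the quotient. -/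
lemma qsmul_eq_self {Δ : Subgroup H3Z} [Δ.Normal] {γ : H3Z} (hγ : γ ∈ Δ)
    (y : H3Z ⧸ Δ) : qsmul γ y = y := by
  induction y using QuotientGroup.induction_on with
  | H a =>
    rw [qsmul_mk, QuotientGroup.eq]
    simpa [mul_assoc] using Subgroup.Normal.conj_mem ‹Δ.Normal› γ⁻¹ (inv_mem hγ) a⁻¹

/-- Coordinate `j` determines coordinate `i ≤ j`. -/
lemma coord_le (x : cptSeq Γ) {i j : ℕ} (h : i ≤ j) (g : H3Z)
    (hg : x.1 j = QuotientGroup.mk g) : x.1 i = QuotientGroup.mk g := by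
  induction j, h using Nat.le_induction with
  | base => exact hg
  | succ n hn ih => exact ih (x.2 n g hg)

/-- The algebra of cylinder sets. -/
def cylAlg (Γ : ℕ → Subgroup H3Z) : Set (Set (cptSeq Γ)) :=
  {s | ∃ (j : ℕ) (S : Set (H3Z ⧸ Γ j)), s = {x : cptSeq Γ | x.1 j ∈ S}}

/-- Lift a level-`i` set to level `j ≥ i`. -/
def liftSet (Γ : ℕ → Subgroup H3Z) (i j : ℕ) (S : Set (H3Z ⧸ Γ i)) : Set (H3Z ⧸ Γ j) :=
  {y | ∀ g : H3Z, y = QuotientGroup.mk g → (QuotientGroup.mk g : H3Z ⧸ Γ i) ∈ S}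

lemma cyl_lift {i j : ℕ} (h : i ≤ j) (S : Set (H3Z ⧸ Γ i)) :
    {x : cptSeq Γ | x.1 i ∈ S} = {x : cptSeq Γ | x.1 j ∈ liftSet Γ i j S} := by
  ext x
  simp only [Set.mem_setOf_eq, liftSet]
  constructor
  · intro hx g hg
    rw [← coord_le x h g hg]; exact hx
  · intro hx
    obtain ⟨g, hg⟩ := Quotient.exists_rep (x.1 j)
    rw [coord_le x h g hg.symm]
    exact hx g hg.symm

lemma cylAlg_isSetAlgebra : MeasureTheory.IsSetAlgebra (cylAlg Γ) where
  empty_mem := ⟨0, ∅, by simp⟩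
  compl_mem := by
    rintro s ⟨j, S, rfl⟩
    exact ⟨j, Sᶜ, rfl⟩
  union_mem := by
    rintro s t ⟨i, S, rfl⟩ ⟨j, T, rfl⟩
    rcases le_total i j with h | h
    · exact ⟨j, liftSet Γ i j S ∪ T, by rw [cyl_lift h S]; ext x; simp only [Set.mem_union,
        Set.mem_setOf_eq]⟩
    · exact ⟨i, S ∪ liftSet Γ j i T, by rw [cyl_lift h T]; ext x; simp only [Set.mem_union,
        Set.mem_setOf_eq]⟩

lemma cylAlg_isPiSystem : IsPiSystem (cylAlg Γ) := by
  rintro s ⟨i, S, rfl⟩ t ⟨j, T, rfl⟩ -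
  rcases le_total i j with h | h
  · exact ⟨j, liftSet Γ i j S ∩ T, by rw [cyl_lift h S]; ext x; simp only [Set.mem_inter_iff,
      Set.mem_setOf_eq]⟩
  · exact ⟨i, S ∩ liftSet Γ j i T, by rw [cyl_lift h T]; ext x; simp only [Set.mem_inter_iff,
      Set.mem_setOf_eq]⟩

lemma coord_measurable (j : ℕ) : Measurable (fun x : cptSeq Γ => x.1 j) :=
  (measurable_pi_apply j).comp measurable_subtype_coe

lemma cylAlg_measurableSet {s : Set (cptSeq Γ)} (hs : s ∈ cylAlg Γ) : MeasurableSet s := by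
  obtain ⟨j, S, rfl⟩ := hs
  exact coord_measurable j MeasurableSpace.measurableSet_top

lemma cylAlg_generates :
    (inferInstance : MeasurableSpace (cptSeq Γ)) = generateFrom (cylAlg Γ) := by
  refine le_antisymm ?_ (generateFrom_le fun s hs => cylAlg_measurableSet hs)
  have h1 : (inferInstance : MeasurableSpace (cptSeq Γ)) =
      ⨆ j, MeasurableSpace.comap (fun x : cptSeq Γ => x.1 j) inferInstance := by
    show MeasurableSpace.comap Subtype.val MeasurableSpace.pi = _
    rw [MeasurableSpace.pi, MeasurableSpace.comap_iSup]
    exact iSup_congr fun j => MeasurableSpace.comap_comp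
  rw [h1]
  refine iSup_le fun j => ?_
  intro s hs
  obtain ⟨t, ht, rfl⟩ := MeasurableSpace.measurableSet_comap.mp hs
  exact measurableSet_generateFrom ⟨j, t, rfl⟩

end Aux
section Aux2

open MeasurableSpace

variable {Γ : ℕ → Subgroup H3Z}

lemma meas_cyl (μ : Measure (cptSeq Γ)) (hfin : ∀ j, (Γ j).FiniteIndex)
    (hcyl : ∀ (j : ℕ) (y : H3Z ⧸ Γ j), μ {x | x.1 j = y} = ((Γ j).index : ENNReal)⁻¹)
    (j : ℕ) (S : Set (H3Z ⧸ Γ j)) :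
    μ {x : cptSeq Γ | x.1 j ∈ S} = S.encard * ((Γ j).index : ENNReal)⁻¹ := by
  haveI := hfin j
  have hU : {x : cptSeq Γ | x.1 j ∈ S} = ⋃ y ∈ S, {x | x.1 j = y} := by
    ext x; simp
  rw [hU, measure_biUnion S.to_countable ?_ ?_]
  · rw [tsum_congr (fun y : S => hcyl j y.1)]
    exact ENNReal.tsum_set_const S _
  · intro y _ z _ hyz
    refine Set.disjoint_left.mpr fun x hx hx' => hyz ?_
    rw [← hx, ← hx']
  · intro y _
    exact coord_measurable (Γ := Γ) j (MeasurableSpace.measurableSet_top (s := {y}))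

lemma vact_measurable (γ : H3Z) : Measurable (Vact Γ γ) :=
  Measurable.subtype_mk <| measurable_pi_lambda _ fun j =>
    (measurable_from_top (f := qsmul (Γ := Γ j) γ)).comp (coord_measurable j)

lemma qsmul_preimage_encard {Δ : Subgroup H3Z} (γ : H3Z) (S : Set (H3Z ⧸ Δ)) :
    (qsmul γ ⁻¹' S).encard = S.encard := by
  have himg : qsmul (Γ := Δ) γ ⁻¹' S = qsmul γ⁻¹ '' S := by
    ext y
    constructor
    · intro hy
      exact ⟨qsmul γ y, hy, qsmul_inv_qsmul γ y⟩
    · rintro ⟨z, hz, rfl⟩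
      show qsmul γ (qsmul γ⁻¹ z) ∈ S
      rwa [qsmul_qsmul_inv]
  have hinj : Function.Injective (qsmul (Γ := Δ) γ⁻¹) := fun a b hab => by
    have := congrArg (qsmul γ) hab
    rwa [qsmul_qsmul_inv, qsmul_qsmul_inv] at this
  rw [himg, hinj.encard_image]

lemma map_vact (μ : Measure (cptSeq Γ)) [IsProbabilityMeasure μ]
    (hfin : ∀ j, (Γ j).FiniteIndex)
    (hcyl : ∀ (j : ℕ) (y : H3Z ⧸ Γ j), μ {x | x.1 j = y} = ((Γ j).index : ENNReal)⁻¹)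
    (γ : H3Z) : Measure.map (Vact Γ γ) μ = μ := by
  haveI : IsProbabilityMeasure (Measure.map (Vact Γ γ) μ) :=
    Measure.isProbabilityMeasure_map (vact_measurable γ).aemeasurable
  refine MeasureTheory.ext_of_generate_finite (cylAlg Γ) cylAlg_generates cylAlg_isPiSystem
    ?_ (by simp)
  rintro s ⟨j, S, rfl⟩
  rw [Measure.map_apply (vact_measurable γ) (cylAlg_measurableSet ⟨j, S, rfl⟩)]
  have hpre : (Vact Γ γ) ⁻¹' {x : cptSeq Γ | x.1 j ∈ S}
      = {x : cptSeq Γ | x.1 j ∈ qsmul γ ⁻¹' S} := rfl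
  rw [hpre, meas_cyl μ hfin hcyl, meas_cyl μ hfin hcyl, qsmul_preimage_encard]

end Aux2
open symmDiff
/-- Lemma 8.4: if the normal `H₃(ℤ)`-odometer given by a decreasing sequence of
finite-index normal subgroups `Γ_j` with trivial intersection admits the homogeneous
space `H₃(ℤ)/Σ` as a measure-theoretic factor, then `Γ_{j₀} ⊆ Σ` for some `j₀`. -/
theorem odometer_finite_factor
    (Γ : ℕ → Subgroup H3Z)
    (hdec : ∀ j, Γ (j + 1) ≤ Γ j)
    (hfin : ∀ j, (Γ j).FiniteIndex)
    (hnorm : ∀ j, (Γ j).Normal)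
    (hint : (⋂ j, (Γ j : Set H3Z)) = {1})
    (μ : Measure (cptSeq Γ)) [IsProbabilityMeasure μ]
    (hcyl : ∀ (j : ℕ) (y : H3Z ⧸ Γ j), μ {x | x.1 j = y} = ((Γ j).index : ENNReal)⁻¹)
    (Sig : Subgroup H3Z) (hSig : Sig.FiniteIndex)
    (q : cptSeq Γ → H3Z ⧸ Sig) (hq : Measurable q)
    (hpush : ∀ y : H3Z ⧸ Sig, Measure.map q μ {y} = (Sig.index : ENNReal)⁻¹)
    (heq : ∀ γ : H3Z, ∀ᵐ x ∂μ, q (Vact Γ γ x) = qsmul γ (q x)) :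
    ∃ j₀, Γ j₀ ≤ Sig := by
  by_contra hcon
  push_neg at hcon
  set c : ENNReal := (Sig.index : ENNReal)⁻¹ with hc
  have hc0 : c ≠ 0 := by simp [hc]
  have hctop : c ≠ ⊤ := by
    simp [hc, hSig.index_ne_zero]
  -- the fiber over the identity coset
  set E : Set (cptSeq Γ) := q ⁻¹' {(QuotientGroup.mk (1 : H3Z) : H3Z ⧸ Sig)} with hE
  have hEm : MeasurableSet E := hq MeasurableSpace.measurableSet_top
  have hμE : μ E = c := by
    rw [← hpush (QuotientGroup.mk 1), Measure.map_apply hq MeasurableSpace.measurableSet_top]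
  -- approximate E by a cylinder set up to c/4
  have hdense : μ.MeasureDense (cylAlg Γ) :=
    Measure.MeasureDense.of_generateFrom_isSetAlgebra_finite μ cylAlg_isSetAlgebra cylAlg_generates
  have hc4top : c / 4 ≠ ⊤ := (ENNReal.div_lt_top hctop (by norm_num)).ne
  have hc40 : c / 4 ≠ 0 := by
    simp only [ne_eq, ENNReal.div_eq_zero_iff, not_or]
    exact ⟨hc0, by norm_num⟩
  have hε0 : 0 < (c / 4).toReal := ENNReal.toReal_pos hc40 hc4top
  obtain ⟨t, ht, hμt⟩ := hdense.approx E hEm (measure_ne_top μ E) _ hε0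
  rw [ENNReal.ofReal_toReal hc4top] at hμt
  obtain ⟨j, S, rfl⟩ := ht
  set A : Set (cptSeq Γ) := {x : cptSeq Γ | x.1 j ∈ S} with hA
  have hAm : MeasurableSet A := cylAlg_measurableSet ⟨j, S, rfl⟩
  -- pick γ ∈ Γ j \ Sig
  obtain ⟨γ, hγΓ, hγS⟩ := SetLike.not_le_iff_exists.mp (hcon j)
  haveI := hnorm j
  set T : cptSeq Γ → cptSeq Γ := Vact Γ γ with hT
  have hTm : Measurable T := vact_measurable γ
  have hinv : ∀ s : Set (cptSeq Γ), MeasurableSet s → μ (T ⁻¹' s) = μ s := by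
    intro s hs
    conv_rhs => rw [← map_vact μ hfin hcyl γ]
    rw [Measure.map_apply hTm hs]
  -- T fixes the cylinder set A
  have hTA : T ⁻¹' A = A := by
    ext x
    show qsmul γ (x.1 j) ∈ S ↔ x.1 j ∈ S
    rw [qsmul_eq_self hγΓ]
  set F : Set (cptSeq Γ) := T ⁻¹' E with hF
  have hFm : MeasurableSet F := hTm hEm
  have hμF : μ F = c := by rw [hF, hinv E hEm, hμE]
  -- E and F are essentially disjoint
  have hnull : μ (E ∩ F) = 0 := by
    refine measure_mono_null ?_ (ae_iff.mp (heq γ))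
    rintro x ⟨hxE, hxF⟩
    simp only [Set.mem_setOf_eq]
    intro hqx
    have h1 : q x = QuotientGroup.mk 1 := hxE
    have h2 : q (Vact Γ γ x) = QuotientGroup.mk 1 := hxF
    rw [h2, h1] at hqx
    have : qsmul γ (QuotientGroup.mk (1 : H3Z) : H3Z ⧸ Sig) = QuotientGroup.mk γ := by
      show qsmul γ (QuotientGroup.mk 1) = _
      rw [qsmul_mk, mul_one]
    rw [this] at hqx
    exact hγS (by simpa using (QuotientGroup.eq.mp hqx))
  -- lower bound for μ (E ∆ F)
  have hEdF : c ≤ μ (E \ F) := by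
    have hsub : E ⊆ (E \ F) ∪ (E ∩ F) := by
      intro x hx
      by_cases hxF : x ∈ F
      · exact Or.inr ⟨hx, hxF⟩
      · exact Or.inl ⟨hx, hxF⟩
    have := (measure_mono hsub).trans (measure_union_le (μ := μ) _ _)
    rwa [hnull, add_zero, hμE] at this
  have hFdE : c ≤ μ (F \ E) := by
    have hsub : F ⊆ (F \ E) ∪ (E ∩ F) := by
      intro x hx
      by_cases hxE : x ∈ E
      · exact Or.inr ⟨hxE, hx⟩
      · exact Or.inl ⟨hx, hxE⟩
    have := (measure_mono hsub).trans (measure_union_le (μ := μ) _ _)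
    rwa [hnull, add_zero, hμF] at this
  have hlower : c + c ≤ μ (E ∆ F) := by
    have hdisj : Disjoint (E \ F) (F \ E) := disjoint_sdiff_sdiff
    have hEF : μ (E ∆ F) = μ (E \ F) + μ (F \ E) := by
      rw [Set.symmDiff_def]
      exact measure_union hdisj (hFm.diff hEm)
    rw [hEF]
    exact add_le_add hEdF hFdE
  -- upper bound for μ (E ∆ F)
  have hFA : μ (F ∆ A) < c / 4 := by
    have hFA' : F ∆ A = T ⁻¹' (E ∆ A) := by
      rw [Set.preimage_symmDiff, hTA]
    rw [hFA', hinv _ (hEm.symmDiff hAm)]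
    exact hμt
  have hupper : μ (E ∆ F) < c / 4 + c / 4 := by
    calc μ (E ∆ F) ≤ μ (E ∆ A) + μ (A ∆ F) := measure_symmDiff_le (μ := μ) E A F
    _ < c / 4 + c / 4 := by
        rw [symmDiff_comm A F]
        exact ENNReal.add_lt_add hμt hFA
  -- contradiction
  have h44 : c / 4 + c / 4 ≤ c := by
    calc c / 4 + c / 4 ≤ c / 2 + c / 2 := by gcongr <;> norm_num
    _ = c := ENNReal.add_halves c
  exact absurd (lt_of_le_of_lt le_self_add
    (lt_of_le_of_lt hlower (lt_of_lt_of_le hupper h44))) (lt_irrefl c)
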